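/- arXiv:2502.02430 — 2 statements merged into one kernel-verified Lean document; each statement's English description precedes it below -/
import Mathlib

section
/- Sufficiency of the Lagrange/KKT conditions: suppose ξ* ∈ [0, ∞)^m satisfies ∑_{i=1}^m ξ*_i = R and there exists Λ ≥ 0 such that for each i ∈ {1, …, m}: if ξ*_i > 0 then (μ̃_i/Δ_i)·R_1(Δ_i/ξ*_i) = Λ, and if ξ*_i = 0 then μ̃_i/Δ_i ≤ Λ. Then ξ* maximizes ∑_{i=1}^m G_i(ξ_i) over all ξ ∈ [0, ∞)^m with ∑_{i=1}^m ξ_i ≤ R. -/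
open Real Finset

/-- Objective contribution of page `i`: `G_i(ξ) = (μ̃_i/Δ_i)·ξ·(1 − exp(−Δ_i/ξ))` for `ξ > 0`
and `G_i(0) = 0`. -/
noncomputable def Gfun (μ Δ ξ : ℝ) : ℝ :=
  if ξ = 0 then 0 else (μ / Δ) * ξ * (1 - Real.exp (-(Δ / ξ)))

/-!
Each `Gᵢ` is concave on `[0, ∞)`, and the KKT conditions say exactly that the line of slope `Λ`
through `(ξ*ᵢ, Gᵢ(ξ*ᵢ))` lies above its graph: at an active page this is the tangent line, at
an inactive one the slope `Λ` dominates the slope `μ̃ᵢ/Δᵢ` of `ξ ↦ (μ̃ᵢ/Δᵢ)·ξ`, which bounds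
`Gᵢ`. Summing these bounds gives `∑ Gᵢ(ξᵢ) ≤ ∑ Gᵢ(ξ*ᵢ) + Λ (∑ ξᵢ - R) ≤ ∑ Gᵢ(ξ*ᵢ)`.
-/

theorem sum_le_sum_of_le_add_mul_sub {ι : Type*} [Fintype ι] (f : ι → ℝ → ℝ)
    (s x : ι → ℝ) (Λ R : ℝ) (hΛ : 0 ≤ Λ) (hs : ∑ i, s i = R) (hx : ∑ i, x i ≤ R)
    (hf : ∀ i, f i (x i) ≤ f i (s i) + Λ * (x i - s i)) :
    ∑ i, f i (x i) ≤ ∑ i, f i (s i) :=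
  calc ∑ i, f i (x i)
      ≤ ∑ i, (f i (s i) + Λ * (x i - s i)) := sum_le_sum fun i _ ↦ hf i
    _ = ∑ i, f i (s i) + Λ * (∑ i, x i - R) := by
        rw [sum_add_distrib, ← mul_sum, sum_sub_distrib, hs]
    _ ≤ ∑ i, f i (s i) := by
        have : Λ * (∑ i, x i - R) ≤ 0 := mul_nonpos_of_nonneg_of_nonpos hΛ (by linarith)
        linarith

theorem exp_neg_mul_one_add_sub_le (a b : ℝ) : exp (-b) * (1 + b - a) ≤ exp (-a) :=
  calc exp (-b) * (1 + b - a) ≤ exp (-b) * exp (b - a) := by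
        gcongr; linarith [add_one_le_exp (b - a)]
    _ = exp (-a) := by rw [← exp_add]; ring_nf

theorem Gfun_eq (μ Δ ξ : ℝ) : Gfun μ Δ ξ = μ / Δ * ξ * (1 - exp (-(Δ / ξ))) := by
  unfold Gfun
  split_ifs with h <;> simp [h]

theorem Gfun_le_div_mul {μ Δ x : ℝ} (hc : 0 ≤ μ / Δ) (hx : 0 ≤ x) :
    Gfun μ Δ x ≤ μ / Δ * x := by
  rw [Gfun_eq]
  have : 0 ≤ μ / Δ * x * exp (-(Δ / x)) := by positivity
  linarith

theorem Gfun_le_tangent {μ Δ s x : ℝ} (hμ : 0 ≤ μ) (hΔ : 0 ≤ Δ) (hs : 0 < s) (hx : 0 ≤ x) :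
    Gfun μ Δ x ≤
      Gfun μ Δ s + μ / Δ * (1 - (1 + Δ / s) * exp (-(Δ / s))) * (x - s) := by
  have hc : 0 ≤ μ / Δ := div_nonneg hμ hΔ
  have hB : Δ / s * s = Δ := div_mul_cancel₀ Δ hs.ne'
  -- with `(Δ / s) * s = Δ`, the gap between the two sides is `μ / Δ` times the gap here
  suffices x * exp (-(Δ / s)) + (x * (Δ / s) - Δ) * exp (-(Δ / s)) ≤ x * exp (-(Δ / x)) by
    rw [Gfun_eq, Gfun_eq]
    linear_combination mul_le_mul_of_nonneg_left this hc - μ / Δ * exp (-(Δ / s)) * hB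
  rcases hx.eq_or_lt with rfl | hx
  · simp only [zero_mul, zero_add, zero_sub, div_zero, neg_zero, exp_zero, mul_one]
    have := mul_nonneg hΔ (exp_pos (-(Δ / s))).le
    linarith
  · have hA : x * (Δ / x) = Δ := mul_div_cancel₀ Δ hx.ne'
    linear_combination mul_le_mul_of_nonneg_left (exp_neg_mul_one_add_sub_le (Δ / x) (Δ / s)) hx.le
      + exp (-(Δ / s)) * hA

theorem Gfun_le_add_mul_sub {μ Δ Λ s x : ℝ} (hμ : 0 ≤ μ) (hΔ : 0 ≤ Δ) (hs : 0 ≤ s)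
    (hx : 0 ≤ x) (hact : 0 < s → μ / Δ * (1 - (1 + Δ / s) * exp (-(Δ / s))) = Λ)
    (hinact : s = 0 → μ / Δ ≤ Λ) :
    Gfun μ Δ x ≤ Gfun μ Δ s + Λ * (x - s) := by
  rcases hs.eq_or_lt with rfl | hs
  · calc Gfun μ Δ x ≤ μ / Δ * x := Gfun_le_div_mul (div_nonneg hμ hΔ) hx
      _ ≤ Λ * x := mul_le_mul_of_nonneg_right (hinact rfl) hx
      _ = Gfun μ Δ 0 + Λ * (x - 0) := by simp [Gfun]
  · rw [← hact hs]
    exact Gfun_le_tangent hμ hΔ hs hx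

theorem stmt_18_general (m : ℕ) (μ Δ : Fin m → ℝ)
    (hμ : ∀ i, 0 < μ i) (hΔ : ∀ i, 0 < Δ i) (R : ℝ)
    (ξs : Fin m → ℝ) (hξs : ∀ i, 0 ≤ ξs i) (hsum : ∑ i, ξs i = R)
    (Λ : ℝ) (hΛ : 0 ≤ Λ)
    (hact : ∀ i, 0 < ξs i →
      (μ i / Δ i) * (1 - (1 + Δ i / ξs i) * Real.exp (-(Δ i / ξs i))) = Λ)
    (hinact : ∀ i, ξs i = 0 → μ i / Δ i ≤ Λ) :
    ∀ ξ : Fin m → ℝ, (∀ i, 0 ≤ ξ i) → ∑ i, ξ i ≤ R →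
      ∑ i, Gfun (μ i) (Δ i) (ξ i) ≤ ∑ i, Gfun (μ i) (Δ i) (ξs i) := fun ξ hξ hle ↦
  sum_le_sum_of_le_add_mul_sub (fun i ↦ Gfun (μ i) (Δ i)) ξs ξ Λ R hΛ hsum hle fun i ↦
    Gfun_le_add_mul_sub (hμ i).le (hΔ i).le (hξs i) (hξ i) (hact i) (hinact i)

/-- Sufficiency of the Lagrange/KKT conditions: if `ξ* ∈ [0,∞)^m` satisfies `∑ᵢ ξ*ᵢ = R` and
there is `Λ ≥ 0` such that for each `i`: `ξ*ᵢ > 0 → (μ̃ᵢ/Δᵢ)·R_1(Δᵢ/ξ*ᵢ) = Λ` and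
`ξ*ᵢ = 0 → μ̃ᵢ/Δᵢ ≤ Λ`, then `ξ*` maximizes `∑ᵢ Gᵢ(ξᵢ)` over all `ξ ∈ [0,∞)^m` with
`∑ᵢ ξᵢ ≤ R` (where `R_1(x) = 1 − (1 + x)·exp(−x)`). -/
theorem stmt_18 (m : ℕ) (hm : 1 ≤ m) (μ Δ : Fin m → ℝ)
    (hμ : ∀ i, 0 < μ i) (hΔ : ∀ i, 0 < Δ i) (R : ℝ) (hR : 0 < R)
    (ξs : Fin m → ℝ) (hξs : ∀ i, 0 ≤ ξs i) (hsum : ∑ i, ξs i = R)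
    (Λ : ℝ) (hΛ : 0 ≤ Λ)
    (hact : ∀ i, 0 < ξs i →
      (μ i / Δ i) * (1 - (1 + Δ i / ξs i) * Real.exp (-(Δ i / ξs i))) = Λ)
    (hinact : ∀ i, ξs i = 0 → μ i / Δ i ≤ Λ) :
    ∀ ξ : Fin m → ℝ, (∀ i, 0 ≤ ξ i) → ∑ i, ξ i ≤ R →
      ∑ i, Gfun (μ i) (Δ i) (ξ i) ≤ ∑ i, Gfun (μ i) (Δ i) (ξs i) :=
  stmt_18_general m μ Δ hμ hΔ R ξs hξs hsum Λ hΛ hact hinact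
end

section
/- Necessity of the Lagrange/KKT conditions: if ξ* ∈ [0, ∞)^m with ∑_{i=1}^m ξ*_i ≤ R maximizes ∑_{i=1}^m G_i(ξ_i) over all ξ ∈ [0, ∞)^m with ∑_{i=1}^m ξ_i ≤ R, then ∑_{i=1}^m ξ*_i = R and there exists Λ ≥ 0 such that for each i ∈ {1, …, m}: if ξ*_i > 0 then (μ̃_i/Δ_i)·R_1(Δ_i/ξ*_i) = Λ, and if ξ*_i = 0 then μ̃_i/Δ_i ≤ Λ. -/
/-!
Shifting a small amount `t` of bandwidth from a page `i` with `ξ*ᵢ > 0` to another page `j`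
cannot increase the objective, so by Fermat's rule for one-sided derivatives the right
derivative of `Gⱼ` at `ξ*ⱼ` is at most the left derivative of `Gᵢ` at `ξ*ᵢ`. On `(0, ∞)` each
`Gᵢ` is differentiable with derivative `(μ̃ᵢ/Δᵢ)·R₁(Δᵢ/ξ)`, and at `0` it has right derivative
`μ̃ᵢ/Δᵢ`, the limit of `Gᵢ(t)/t`. Comparing pages in both directions gives the conditions, with
`Λ` the common marginal gain of the pages with `ξ*ᵢ > 0`. All marginal gains are positive, so
leftover budget could be spent profitably; hence the budget is exhausted.
-/

open Real Finset

open Filter Topology Function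

theorem IsLocalMaxOn.hasDerivWithinAt_Ici_nonpos {f : ℝ → ℝ} {a d : ℝ}
    (h : IsLocalMaxOn f (Set.Ici a) a) (hf : HasDerivWithinAt f d (Set.Ici a) a) : d ≤ 0 := by
  have hone : (1 : ℝ) ∈ posTangentConeAt (Set.Ici a) a :=
    mem_posTangentConeAt_of_segment_subset
      ((segment_subset_Icc (by linarith)).trans Set.Icc_subset_Ici_self)
  simpa using h.hasFDerivWithinAt_nonpos hf hone

theorem Finset.sum_apply_update {ι α M : Type*} [Fintype ι] [DecidableEq ι] [AddCommGroup M]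
    (f : ι → α → M) (x : ι → α) (i : ι) (b : α) :
    ∑ k, f k (update x i b k) = ∑ k, f k (x k) + (f i b - f i (x i)) := by
  rw [← add_sum_erase _ _ (mem_univ i), ← add_sum_erase _ _ (mem_univ i), update_self,
    sum_congr rfl fun k hk => by rw [update_of_ne (ne_of_mem_erase hk)]]
  abel

theorem HasDerivWithinAt.comp_const_add_Ici {f : ℝ → ℝ} {a d : ℝ}
    (hf : HasDerivWithinAt f d (Set.Ici a) a) :
    HasDerivWithinAt (fun t => f (a + t)) d (Set.Ici 0) 0 := by
  simpa [comp_def] using hf.comp_of_eq 0 ((hasDerivAt_id (0 : ℝ)).const_add a).hasDerivWithinAt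
    (fun t (ht : t ∈ Set.Ici (0 : ℝ)) => Set.mem_Ici.2 (le_add_of_nonneg_right (Set.mem_Ici.1 ht)))
    (add_zero a).symm

theorem HasDerivWithinAt.comp_const_sub_Iic {f : ℝ → ℝ} {a d : ℝ}
    (hf : HasDerivWithinAt f d (Set.Iic a) a) :
    HasDerivWithinAt (fun t => f (a - t)) (-d) (Set.Ici 0) 0 := by
  simpa [comp_def] using hf.comp_of_eq 0 ((hasDerivAt_id (0 : ℝ)).const_sub a).hasDerivWithinAt
    (fun t (ht : t ∈ Set.Ici (0 : ℝ)) => Set.mem_Iic.2 (sub_le_self a (Set.mem_Ici.1 ht)))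
    (sub_zero a).symm

section BudgetMaximizer

variable {ι : Type*} [Fintype ι] [DecidableEq ι] {f : ι → ℝ → ℝ} {R : ℝ} {x : ι → ℝ}

def IsBudgetMaximizer (f : ι → ℝ → ℝ) (R : ℝ) (x : ι → ℝ) : Prop :=
  ∀ ξ : ι → ℝ, (∀ i, 0 ≤ ξ i) → ∑ i, ξ i ≤ R → ∑ i, f i (ξ i) ≤ ∑ i, f i (x i)

theorem IsBudgetMaximizer.nonpos_of_sum_lt (hmax : IsBudgetMaximizer f R x)
    (hx : ∀ i, 0 ≤ x i) (hslack : ∑ i, x i < R) {j : ι} {d : ℝ}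
    (hd : HasDerivWithinAt (f j) d (Set.Ici (x j)) (x j)) : d ≤ 0 := by
  refine IsLocalMaxOn.hasDerivWithinAt_Ici_nonpos (f := fun t => f j (x j + t)) (a := 0) ?_ ?_
  · filter_upwards [Ico_mem_nhdsGE (sub_pos.2 hslack)] with t ⟨ht₀, htR⟩
    have hnonneg : ∀ k, 0 ≤ update x j (x j + t) k := fun k => by
      rw [update_apply]; split_ifs with hk
      · linarith [hx j]
      · exact hx k
    have hbudget : ∑ k, update x j (x j + t) k ≤ R := by
      simpa using (sum_apply_update (fun _ y => y) x j (x j + t)).trans_le (by linarith)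
    have := hmax _ hnonneg hbudget
    rw [sum_apply_update] at this
    simpa using this
  · exact hd.comp_const_add_Ici

theorem IsBudgetMaximizer.le_of_transfer (hmax : IsBudgetMaximizer f R x)
    (hx : ∀ i, 0 ≤ x i) (hsum : ∑ i, x i ≤ R) {i j : ι} (hij : i ≠ j) (hi : 0 < x i)
    {dᵢ dⱼ : ℝ} (hdᵢ : HasDerivWithinAt (f i) dᵢ (Set.Iic (x i)) (x i))
    (hdⱼ : HasDerivWithinAt (f j) dⱼ (Set.Ici (x j)) (x j)) : dⱼ ≤ dᵢ := by
  suffices dⱼ - dᵢ ≤ 0 by linarith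
  refine IsLocalMaxOn.hasDerivWithinAt_Ici_nonpos
    (f := fun t => f j (x j + t) + f i (x i - t)) (a := 0) ?_ ?_
  · filter_upwards [Ico_mem_nhdsGE hi] with t ⟨ht₀, htx⟩
    set ξ := update (update x i (x i - t)) j (x j + t)
    have hnonneg : ∀ k, 0 ≤ ξ k := fun k => by
      simp only [ξ, update_apply]; split_ifs with hkj hki
      · linarith [hx j]
      · linarith
      · exact hx k
    have hxj : update x i (x i - t) j = x j := update_of_ne hij.symm _ _
    have hbudget : ∑ k, ξ k ≤ R := by
      have h₁ := sum_apply_update (fun _ y => y) (update x i (x i - t)) j (x j + t)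
      have h₂ := sum_apply_update (fun _ y => y) x i (x i - t)
      simp only [hxj] at h₁ h₂
      linarith
    have := hmax ξ hnonneg hbudget
    rw [sum_apply_update, sum_apply_update, hxj] at this
    simp only [sub_zero, add_zero]
    linarith
  · rw [sub_eq_add_neg]
    exact hdⱼ.comp_const_add_Ici.add hdᵢ.comp_const_sub_Iic

end BudgetMaximizer

noncomputable def expResidual (x : ℝ) : ℝ := 1 - (1 + x) * exp (-x)

theorem expResidual_pos {x : ℝ} (hx : 0 < x) : 0 < expResidual x := by
  have h := mul_lt_mul_of_pos_right (add_one_lt_exp hx.ne') (exp_pos (-x))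
  rw [← exp_add, add_neg_cancel, exp_zero, add_comm] at h
  exact sub_pos.2 h

theorem hasDerivAt_Gfun (μ Δ : ℝ) {x : ℝ} (hx : x ≠ 0) :
    HasDerivAt (Gfun μ Δ) (μ / Δ * expResidual (Δ / x)) x := by
  have hexp : HasDerivAt (fun y => exp (-(Δ / y))) (exp (-(Δ / x)) * (Δ / x ^ 2)) x := by
    have := ((hasDerivAt_inv hx).const_mul Δ).neg.exp
    convert this using 1
    · ext y; simp [div_eq_mul_inv]
    · simp only [Pi.neg_apply, div_eq_mul_inv]
      field_simp
  have hformula := (((hasDerivAt_id x).const_mul (μ / Δ)).mul (hexp.const_sub 1))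
  refine (hformula.congr_deriv ?_).congr_of_eventuallyEq ?_
  · simp only [expResidual, id]
    field_simp
    ring
  · filter_upwards [eventually_ne_nhds hx] with y hy
    simp [Gfun, hy]

theorem hasDerivWithinAt_Gfun_zero (μ : ℝ) {Δ : ℝ} (hΔ : 0 < Δ) :
    HasDerivWithinAt (Gfun μ Δ) (μ / Δ) (Set.Ici 0) 0 := by
  rw [← hasDerivWithinAt_Ioi_iff_Ici, hasDerivWithinAt_iff_tendsto_slope' Set.self_notMem_Ioi]
  have hlim : Tendsto (fun t => μ / Δ * (1 - exp (-(Δ * t⁻¹)))) (𝓝[>] 0) (𝓝 (μ / Δ * (1 - 0))) :=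
    ((tendsto_exp_neg_atTop_nhds_zero.comp
      (tendsto_inv_nhdsGT_zero.const_mul_atTop hΔ)).const_sub 1).const_mul _
  rw [sub_zero, mul_one] at hlim
  refine hlim.congr' ?_
  filter_upwards [self_mem_nhdsWithin] with t (ht : 0 < t)
  simp only [slope_def_field, Gfun, if_neg ht.ne', if_pos, sub_zero]
  field_simp

noncomputable def marginalGain (μ Δ x : ℝ) : ℝ :=
  if x = 0 then μ / Δ else μ / Δ * expResidual (Δ / x)

theorem marginalGain_of_ne_zero (μ Δ : ℝ) {x : ℝ} (hx : x ≠ 0) :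
    marginalGain μ Δ x = μ / Δ * expResidual (Δ / x) :=
  if_neg hx

theorem marginalGain_pos {μ Δ x : ℝ} (hμ : 0 < μ) (hΔ : 0 < Δ) (hx : 0 ≤ x) :
    0 < marginalGain μ Δ x := by
  unfold marginalGain
  split_ifs with h
  · positivity
  · exact mul_pos (by positivity) (expResidual_pos (div_pos hΔ (lt_of_le_of_ne hx (Ne.symm h))))

theorem hasDerivWithinAt_Ici_Gfun (μ : ℝ) {Δ : ℝ} (hΔ : 0 < Δ) (x : ℝ) :
    HasDerivWithinAt (Gfun μ Δ) (marginalGain μ Δ x) (Set.Ici x) x := by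
  rcases eq_or_ne x 0 with rfl | hx
  · simpa [marginalGain] using hasDerivWithinAt_Gfun_zero μ hΔ
  · rw [marginalGain_of_ne_zero μ Δ hx]
    exact (hasDerivAt_Gfun μ Δ hx).hasDerivWithinAt

/-- Necessity of the Lagrange/KKT conditions: if `ξ* ∈ [0,∞)^m` with `∑ᵢ ξ*ᵢ ≤ R` maximizes
`∑ᵢ Gᵢ(ξᵢ)` over all `ξ ∈ [0,∞)^m` with `∑ᵢ ξᵢ ≤ R`, then `∑ᵢ ξ*ᵢ = R` and there exists
`Λ ≥ 0` such that for each `i`: `ξ*ᵢ > 0 → (μ̃ᵢ/Δᵢ)·R_1(Δᵢ/ξ*ᵢ) = Λ` and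
`ξ*ᵢ = 0 → μ̃ᵢ/Δᵢ ≤ Λ` (where `R_1(x) = 1 − (1 + x)·exp(−x)`). -/
theorem stmt_19 (m : ℕ) (hm : 1 ≤ m) (μ Δ : Fin m → ℝ)
    (hμ : ∀ i, 0 < μ i) (hΔ : ∀ i, 0 < Δ i) (R : ℝ) (hR : 0 < R)
    (ξs : Fin m → ℝ) (hξs : ∀ i, 0 ≤ ξs i) (hsum : ∑ i, ξs i ≤ R)
    (hopt : ∀ ξ : Fin m → ℝ, (∀ i, 0 ≤ ξ i) → ∑ i, ξ i ≤ R →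
      ∑ i, Gfun (μ i) (Δ i) (ξ i) ≤ ∑ i, Gfun (μ i) (Δ i) (ξs i)) :
    ∑ i, ξs i = R ∧
    ∃ Λ : ℝ, 0 ≤ Λ ∧
      (∀ i, 0 < ξs i →
        (μ i / Δ i) * (1 - (1 + Δ i / ξs i) * Real.exp (-(Δ i / ξs i))) = Λ) ∧
      (∀ i, ξs i = 0 → μ i / Δ i ≤ Λ) := by
  have hmax : IsBudgetMaximizer (fun i => Gfun (μ i) (Δ i)) R ξs := hopt
  have hright i := hasDerivWithinAt_Ici_Gfun (μ i) (hΔ i) (ξs i)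
  have hsat : ∑ i, ξs i = R := hsum.eq_of_not_lt fun hlt =>
    (marginalGain_pos (hμ ⟨0, hm⟩) (hΔ _) (hξs _)).not_ge
      (hmax.nonpos_of_sum_lt hξs hlt (hright _))
  obtain ⟨i₁, hi₁⟩ : ∃ i, 0 < ξs i := by
    simpa using exists_lt_of_sum_lt (s := univ) (f := 0) (g := ξs) (by simpa [hsat] using hR)
  have hle : ∀ i, 0 < ξs i → ∀ j,
      marginalGain (μ j) (Δ j) (ξs j) ≤ marginalGain (μ i) (Δ i) (ξs i) := by
    intro i hi j
    rcases eq_or_ne i j with rfl | hij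
    · rfl
    refine hmax.le_of_transfer hξs hsum hij hi ?_ (hright j)
    rw [marginalGain_of_ne_zero _ _ hi.ne']
    exact (hasDerivAt_Gfun _ _ hi.ne').hasDerivWithinAt
  refine ⟨hsat, _, (marginalGain_pos (hμ i₁) (hΔ i₁) (hξs i₁)).le, fun i hi => ?_, fun i hi => ?_⟩
  · rw [← expResidual, ← marginalGain_of_ne_zero _ _ hi.ne']
    exact le_antisymm (hle i₁ hi₁ i) (hle i hi i₁)
  · simpa [marginalGain, hi] using hle i₁ hi₁ i
end
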